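/- Let E be a Frobenius exact category. Then MMor_k(E) is a Frobenius exact category: it has enough projectives and enough injectives, and its projective and injective objects coincide. -/

import Mathlib

open CategoryTheory Limits

universe v u

/-- An exact structure (in the sense of Quillen/Bühler) on an additive category `E`:
a class of kernel–cokernel pairs (`ses f g` meaning `X ↣ Y ↠ Z` is an admissible short
exact sequence), closed under isomorphism, such that admissible monomorphisms (resp.
epimorphisms) contain identities, are closed under composition, and are stable under
pushout (resp. pullback). -/
structure ExactStructure (E : Type u) [Category.{v} E] [Preadditive E] [HasZeroObject E] where
  ses : ∀ ⦃X Y Z : E⦄, (X ⟶ Y) → (Y ⟶ Z) → Prop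
  comp_zero : ∀ {X Y Z : E} {f : X ⟶ Y} {g : Y ⟶ Z}, ses f g → f ≫ g = 0
  isKernel : ∀ {X Y Z : E} {f : X ⟶ Y} {g : Y ⟶ Z} (h : ses f g),
      Nonempty (IsLimit (KernelFork.ofι f (comp_zero h)))
  isCokernel : ∀ {X Y Z : E} {f : X ⟶ Y} {g : Y ⟶ Z} (h : ses f g),
      Nonempty (IsColimit (CokernelCofork.ofπ g (comp_zero h)))
  iso_closed : ∀ {X Y Z X' Y' Z' : E} {f : X ⟶ Y} {g : Y ⟶ Z}
      (eX : X ≅ X') (eY : Y ≅ Y') (eZ : Z ≅ Z') {f' : X' ⟶ Y'} {g' : Y' ⟶ Z'},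
      f ≫ eY.hom = eX.hom ≫ f' → g ≫ eZ.hom = eY.hom ≫ g' → ses f g → ses f' g'
  id_mono : ∀ X : E, ∃ (Z : E) (g : X ⟶ Z), ses (𝟙 X) g
  id_epi : ∀ X : E, ∃ (W : E) (f : W ⟶ X), ses f (𝟙 X)
  mono_comp : ∀ {X Y Z : E} {f : X ⟶ Y} {g : Y ⟶ Z},
      (∃ (W : E) (h : Y ⟶ W), ses f h) → (∃ (W : E) (h : Z ⟶ W), ses g h) →
      ∃ (W : E) (h : Z ⟶ W), ses (f ≫ g) h
  epi_comp : ∀ {X Y Z : E} {f : X ⟶ Y} {g : Y ⟶ Z},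
      (∃ (W : E) (h : W ⟶ X), ses h f) → (∃ (W : E) (h : W ⟶ Y), ses h g) →
      ∃ (W : E) (h : W ⟶ X), ses h (f ≫ g)
  mono_pushout : ∀ {X Y Z : E} (f : X ⟶ Y) (t : X ⟶ Z),
      (∃ (W : E) (g : Y ⟶ W), ses f g) →
      ∃ (P : E) (f' : Z ⟶ P) (t' : Y ⟶ P), IsPushout t f f' t' ∧
        ∃ (W : E) (g : P ⟶ W), ses f' g
  epi_pullback : ∀ {X Y Z : E} (g : Y ⟶ X) (t : Z ⟶ X),
      (∃ (W : E) (f : W ⟶ Y), ses f g) →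
      ∃ (P : E) (g' : P ⟶ Z) (t' : P ⟶ Y), IsPullback g' t' t g ∧
        ∃ (W : E) (f : W ⟶ P), ses f g'

namespace ExactStructure

variable {E : Type u} [Category.{v} E] [Preadditive E] [HasZeroObject E]
variable (S : ExactStructure E)

/-- `f` is an admissible monomorphism. -/
def AdmMono {X Y : E} (f : X ⟶ Y) : Prop := ∃ (Z : E) (g : Y ⟶ Z), S.ses f g

/-- `g` is an admissible epimorphism. -/
def AdmEpi {Y Z : E} (g : Y ⟶ Z) : Prop := ∃ (X : E) (f : X ⟶ Y), S.ses f g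

/-- An object of `E` is injective (w.r.t. the exact structure). -/
def EInjective (I : E) : Prop :=
  ∀ ⦃X Y : E⦄ (f : X ⟶ Y), S.AdmMono f → ∀ u : X ⟶ I, ∃ v : Y ⟶ I, f ≫ v = u

/-- An object of `E` is projective (w.r.t. the exact structure). -/
def EProjective (P : E) : Prop :=
  ∀ ⦃Y Z : E⦄ (g : Y ⟶ Z), S.AdmEpi g → ∀ u : P ⟶ Z, ∃ v : P ⟶ Y, v ≫ g = u

/-- An object of the monomorphism category `MMor_k(E)`: a diagram of `k` composable
admissible monomorphisms in `E`. -/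
structure MMorObj (k : ℕ) where
  obj : Fin (k + 1) → E
  map : ∀ i : Fin k, obj i.castSucc ⟶ obj i.succ
  adm : ∀ i, S.AdmMono (map i)

/-- A morphism in the monomorphism category `MMor_k(E)`. -/
structure MMorHom {k : ℕ} (X Y : S.MMorObj k) where
  app : ∀ i, X.obj i ⟶ Y.obj i
  comm : ∀ i : Fin k, X.map i ≫ app i.succ = app i.castSucc ≫ Y.map i

variable {S}

/-- A componentwise admissible short exact sequence in `MMor_k(E)`. -/
def MMorSes {k : ℕ} {X Y Z : S.MMorObj k} (f : S.MMorHom X Y) (g : S.MMorHom Y Z) : Prop :=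
  ∀ i, S.ses (f.app i) (g.app i)

/-- Admissible monomorphisms of `MMor_k(E)`. -/
def MMorAdmMono {k : ℕ} {X Y : S.MMorObj k} (f : S.MMorHom X Y) : Prop :=
  ∃ (Z : S.MMorObj k) (g : S.MMorHom Y Z), MMorSes f g

/-- Admissible epimorphisms of `MMor_k(E)`. -/
def MMorAdmEpi {k : ℕ} {Y Z : S.MMorObj k} (g : S.MMorHom Y Z) : Prop :=
  ∃ (X : S.MMorObj k) (f : S.MMorHom X Y), MMorSes f g

/-- Injective objects of the exact category `MMor_k(E)`. -/
def MMorInjective {k : ℕ} (I : S.MMorObj k) : Prop :=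
  ∀ ⦃X Y : S.MMorObj k⦄ (f : S.MMorHom X Y), MMorAdmMono f →
    ∀ u : S.MMorHom X I, ∃ v : S.MMorHom Y I, ∀ i, f.app i ≫ v.app i = u.app i

/-- Projective objects of the exact category `MMor_k(E)`. -/
def MMorProjective {k : ℕ} (P : S.MMorObj k) : Prop :=
  ∀ ⦃Y Z : S.MMorObj k⦄ (g : S.MMorHom Y Z), MMorAdmEpi g →
    ∀ u : S.MMorHom P Z, ∃ v : S.MMorHom P Y, ∀ i, v.app i ≫ g.app i = u.app i

end ExactStructure

/-!
Lifts into a split object `P` of `MMor_k(E)` with projective terms are built term by term: a lift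
at `j + 1` is corrected by the idempotent `𝟙 - r ≫ p`, where `r` splits `p : P_j ↣ P_{j+1}`, so
that it extends the lift at `j`. Extensions into an object `J` with injective terms along
`A ↣ B ↠ D` are built the same way: at `j + 1` the map is first defined on the pullback of
`B_{j+1} ↠ D_{j+1}` along `D_j ↣ D_{j+1}`, an admissible subobject of `B_{j+1}` through which
both `A_{j+1}` and `B_j` factor.

Every `X` receives an admissible epimorphism from a split object with projective terms
`P_{j+1} = P_j ⊞ G_{j+1}`, where `G_{j+1} ↠ X_{j+1}` is projective; its kernel lies in `MMor_k(E)`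
by Noether's isomorphism. Similarly `X` embeds into an object whose term `J_{j+1}` is an injective
containing the pushout of `X_j ↣ X_{j+1}` along `X_j ↣ J_j`. When `E` is Frobenius, the terms of
both are projective and injective, and admissible monomorphisms between injectives split, so both
objects are projective and injective in `MMor_k(E)`; a projective (injective) object is a retract
of the first (second) one.
-/

lemma Fin.exists_forall_rel_castSucc_succ {k : ℕ} {D : Fin (k + 1) → Sort*}
    {R : ∀ j : Fin k, D j.castSucc → D j.succ → Prop} (d₀ : D 0)
    (step : ∀ j d, ∃ d', R j d d') : ∃ d : ∀ i, D i, ∀ j, R j (d j.castSucc) (d j.succ) :=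
  ⟨Fin.induction d₀ fun j d => (step j d).choose, fun j => by
    dsimp only; rw [Fin.induction_succ]; exact (step j _).choose_spec⟩

namespace CategoryTheory

variable {C : Type*} [Category C] [HasZeroMorphisms C]

noncomputable def IsPullback.isLimitKernelForkOfIsLimit {P X Y Z K : C} {g : Y ⟶ X} {t : Z ⟶ X}
    {g' : P ⟶ Z} {t' : P ⟶ Y} (h : IsPullback g' t' t g) {κ : K ⟶ Y} {w : κ ≫ g = 0}
    (hκ : IsLimit (KernelFork.ofι κ w)) {t₀ : K ⟶ P} (h₁ : t₀ ≫ t' = κ) (h₂ : t₀ ≫ g' = 0) :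
    IsLimit (KernelFork.ofι t₀ h₂) :=
  KernelFork.IsLimit.ofι _ _
    (fun τ hτ => hκ.lift (KernelFork.ofι (τ ≫ t') (by rw [Category.assoc, ← h.w,
      ← Category.assoc, hτ, zero_comp])))
    (fun τ hτ => h.hom_ext (by simp [h₂, hτ])
      (by rw [Category.assoc, h₁]; exact Fork.IsLimit.lift_ι hκ))
    (fun τ hτ m hm => Fork.IsLimit.hom_ext hκ
      ((by rw [← hm, Category.assoc, h₁] : m ≫ κ = τ ≫ t').trans
        (Fork.IsLimit.lift_ι hκ (t := KernelFork.ofι (τ ≫ t') _)).symm))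

noncomputable def IsPushout.isColimitCokernelCoforkOfIsColimit {X M X' P Q : C} {t : X ⟶ M}
    {l : X ⟶ X'} {r : M ⟶ P} {b : X' ⟶ P} (h : IsPushout t l r b) {π : M ⟶ Q} {w : t ≫ π = 0}
    (hπ : IsColimit (CokernelCofork.ofπ π w)) {q : P ⟶ Q} (h₁ : r ≫ q = π) (h₂ : b ≫ q = 0) :
    IsColimit (CokernelCofork.ofπ q h₂) :=
  CokernelCofork.IsColimit.ofπ _ _
    (fun τ hτ => hπ.desc (CokernelCofork.ofπ (r ≫ τ) (by rw [← Category.assoc, h.w,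
      Category.assoc, hτ, comp_zero])))
    (fun τ hτ => h.hom_ext (by rw [reassoc_of% h₁]; exact Cofork.IsColimit.π_desc hπ)
      (by simp [reassoc_of% h₂, hτ]))
    (fun τ hτ m hm => Cofork.IsColimit.hom_ext hπ
      ((by rw [← hm, ← h₁, Category.assoc] : π ≫ m = r ≫ τ).trans
        (Cofork.IsColimit.π_desc hπ (t := CokernelCofork.ofπ (r ≫ τ) _)).symm))

lemma IsPullback.of_isLimit_kernelFork_comp {A B D K L : C} {a : A ⟶ B} {b : B ⟶ D}
    {κb : L ⟶ B} {κ : K ⟶ A} {wb : κb ≫ b = 0} {w : κ ≫ a ≫ b = 0}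
    (hb : IsLimit (KernelFork.ofι κb wb)) (hab : IsLimit (KernelFork.ofι κ w)) {m : K ⟶ L}
    (hm : m ≫ κb = κ ≫ a) : IsPullback m κ κb a := by
  have : Mono κb := Fork.IsLimit.mono hb
  have hlift (s : PullbackCone κb a) : hab.lift (KernelFork.ofι s.snd (by
      rw [← Category.assoc, ← s.condition, Category.assoc, wb, comp_zero])) ≫ κ = s.snd :=
    Fork.IsLimit.lift_ι hab
  refine IsPullback.of_isLimit' ⟨hm⟩ (PullbackCone.IsLimit.mk hm _ (fun s => ?_) hlift
    (fun s n _ hn => Fork.IsLimit.hom_ext hab (hn.trans (hlift s).symm)))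
  rw [← cancel_mono κb, Category.assoc, hm, ← Category.assoc, hlift, s.condition]

section Biprod

variable [HasBinaryBiproducts C]

lemma isPullback_biprod_map_fst {X Y : C} (f : Y ⟶ X) (Z : C) :
    IsPullback (biprod.map f (𝟙 Z)) biprod.fst biprod.fst f :=
  IsPullback.of_isLimit' ⟨by simp⟩ (PullbackCone.IsLimit.mk _
    (fun s => biprod.lift s.snd (s.fst ≫ biprod.snd)) (fun s => by ext <;> simp [s.condition])
    (fun s => by simp) (fun s m h₁ h₂ => by ext <;> simp [← h₁, ← h₂]))

lemma isPullback_biprod_map_snd {X Y : C} (f : Y ⟶ X) (Z : C) :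
    IsPullback (biprod.map (𝟙 Z) f) biprod.snd biprod.snd f :=
  IsPullback.of_isLimit' ⟨by simp⟩ (PullbackCone.IsLimit.mk _
    (fun s => biprod.lift (s.fst ≫ biprod.fst) s.snd) (fun s => by ext <;> simp [s.condition])
    (fun s => by simp) (fun s m h₁ h₂ => by ext <;> simp [← h₁, ← h₂]))

end Biprod

end CategoryTheory

namespace ExactStructure

variable {E : Type u} [Category.{v} E] [Preadditive E] [HasZeroObject E] {S : ExactStructure E}

lemma ses_of_isCokernel {X Y Z Z' : E} {f : X ⟶ Y} {g : Y ⟶ Z} (h : S.ses f g)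
    {g' : Y ⟶ Z'} {w : f ≫ g' = 0} (hc : IsColimit (CokernelCofork.ofπ g' w)) :
    S.ses f g' := by
  obtain ⟨hg⟩ := S.isCokernel h
  refine S.iso_closed (Iso.refl _) (Iso.refl _) (hg.coconePointUniqueUpToIso hc) (by simp) ?_ h
  simpa using hg.comp_coconePointUniqueUpToIso_hom hc WalkingParallelPair.one

lemma ses_of_isKernel {X X' Y Z : E} {f : X ⟶ Y} {g : Y ⟶ Z} (h : S.ses f g)
    {f' : X' ⟶ Y} {w : f' ≫ g = 0} (hl : IsLimit (KernelFork.ofι f' w)) :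
    S.ses f' g := by
  obtain ⟨hf⟩ := S.isKernel h
  refine S.iso_closed (hf.conePointUniqueUpToIso hl) (Iso.refl _) (Iso.refl _) ?_ (by simp) h
  simpa using (hf.conePointUniqueUpToIso_hom_comp hl WalkingParallelPair.zero).symm

lemma admMono_of_isPushout {X Y Z P : E} {t : X ⟶ Z} {f : X ⟶ Y} {f' : Z ⟶ P} {t' : Y ⟶ P}
    (h : IsPushout t f f' t') (hf : S.AdmMono f) : S.AdmMono f' := by
  obtain ⟨Q, f'', t'', h', W, g, hg⟩ := S.mono_pushout f t hf
  exact ⟨W, (h'.isoIsPushout _ _ h).inv ≫ g,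
    S.iso_closed (Iso.refl _) (h'.isoIsPushout _ _ h) (Iso.refl _) (by simp) (by simp) hg⟩

lemma admEpi_of_isPullback {X Y Z P : E} {g : Y ⟶ X} {t : Z ⟶ X} {g' : P ⟶ Z} {t' : P ⟶ Y}
    (h : IsPullback g' t' t g) (hg : S.AdmEpi g) : S.AdmEpi g' := by
  obtain ⟨Q, g'', t'', h', W, f, hf⟩ := S.epi_pullback g t hg
  exact ⟨W, f ≫ (h.isoIsPullback _ _ h').inv,
    S.iso_closed (Iso.refl _) (h.isoIsPullback _ _ h').symm (Iso.refl _) (by simp) (by simp) hf⟩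

lemma ses_kernel_lift_of_isPullback {P X Y Z K : E} {g : Y ⟶ X} {t : Z ⟶ X} {g' : P ⟶ Z}
    {t' : P ⟶ Y} (h : IsPullback g' t' t g) {κ : K ⟶ Y} (hκ : S.ses κ g) {t₀ : K ⟶ P}
    (h₁ : t₀ ≫ t' = κ) (h₂ : t₀ ≫ g' = 0) : S.ses t₀ g' := by
  obtain ⟨W, f, hf⟩ := admEpi_of_isPullback h ⟨_, _, hκ⟩
  exact ses_of_isKernel hf (h.isLimitKernelForkOfIsLimit (S.isKernel hκ).some h₁ h₂)

lemma ses_cokernel_desc_of_isPushout {X M X' P Q : E} {t : X ⟶ M} {l : X ⟶ X'} {r : M ⟶ P}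
    {b : X' ⟶ P} (h : IsPushout t l r b) {π : M ⟶ Q} (hπ : S.ses t π) {q : P ⟶ Q}
    (h₁ : r ≫ q = π) (h₂ : b ≫ q = 0) : S.ses b q := by
  obtain ⟨W, g, hg⟩ := admMono_of_isPushout h.flip ⟨_, _, hπ⟩
  exact ses_of_isCokernel hg (h.isColimitCokernelCoforkOfIsColimit (S.isCokernel hπ).some h₁ h₂)

lemma ses_snd_of_isPullback {P X Y Z Q : E} {g : Y ⟶ X} {t : Z ⟶ X} {g' : P ⟶ Z} {t' : P ⟶ Y}
    (h : IsPullback g' t' t g) (hg : S.AdmEpi g) {q : X ⟶ Q} (ht : S.ses t q) :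
    S.ses t' (g ≫ q) := by
  obtain ⟨W, f, hf⟩ := S.epi_comp hg ⟨_, _, ht⟩
  exact ses_of_isKernel hf (normalOfIsPullbackSndOfNormal
    (hn := ⟨Q, q, S.comp_zero ht, (S.isKernel ht).some⟩) h.w h.isLimit).isLimit

lemma ses_comp_of_isPushout {X P Q R T : E} {x : X ⟶ P} {f : P ⟶ Q} {g : P ⟶ R} {h : Q ⟶ T}
    {k : R ⟶ T} (hpo : IsPushout f g h k) (hf : S.AdmMono f) (hg : S.ses x g) :
    S.ses (x ≫ f) h := by
  obtain ⟨W, c, hc⟩ := S.mono_comp ⟨_, _, hg⟩ hf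
  exact ses_of_isCokernel hc (normalOfIsPushoutSndOfNormal
    (gn := ⟨X, x, S.comp_zero hg, (S.isCokernel hg).some⟩) hpo.w hpo.isColimit).isColimit

/-- Noether's isomorphism `ker (a ≫ b) / ker a ≅ ker b`. -/
lemma ses_kernel_comp {A B D Ka Kb K : E} {a : A ⟶ B} {b : B ⟶ D} {κa : Ka ⟶ A} {κb : Kb ⟶ B}
    {κ : K ⟶ A} (ha : S.ses κa a) (hb : S.ses κb b) (hab : S.ses κ (a ≫ b)) {l : Ka ⟶ K}
    {m : K ⟶ Kb} (hl : l ≫ κ = κa) (hm : m ≫ κb = κ ≫ a) : S.ses l m := by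
  have : Mono κb := Fork.IsLimit.mono (S.isKernel hb).some
  refine ses_kernel_lift_of_isPullback (IsPullback.of_isLimit_kernelFork_comp
    (S.isKernel hb).some (S.isKernel hab).some hm) ha hl ?_
  rw [← cancel_mono κb, Category.assoc, hm, reassoc_of% hl, S.comp_zero ha, zero_comp]

open ZeroObject in
lemma ses_zero_id (Y : E) : S.ses (0 : 0 ⟶ Y) (𝟙 Y) := by
  obtain ⟨W, f, h⟩ := S.id_epi Y
  exact ses_of_isKernel h (w := by simp)
    (KernelFork.IsLimit.ofMonoOfIsZero (KernelFork.ofι _ _) inferInstance (isZero_zero E))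

open ZeroObject in
lemma hasBinaryBiproducts (S : ExactStructure E) : HasBinaryBiproducts E := by
  have (X Y : E) : HasColimit (pair X Y) := by
    obtain ⟨P, f, t, h, -⟩ := S.mono_pushout (0 : (0 : E) ⟶ Y) (0 : (0 : E) ⟶ X)
      ⟨_, _, ses_zero_id Y⟩
    exact HasColimit.mk
      ⟨_, isCoproductOfIsInitialIsPushout _ _ _ _ HasZeroObject.zeroIsInitial h.isColimit⟩
  have : HasBinaryCoproducts E := ⟨fun F => hasColimit_of_iso (diagramIsoPair F)⟩
  exact HasBinaryBiproducts.of_hasBinaryCoproducts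

section Biprod

variable [HasBinaryBiproducts E]

lemma ses_inl_snd (X Y : E) : S.ses (biprod.inl : X ⟶ X ⊞ Y) biprod.snd := by
  obtain ⟨Z, g, h⟩ := admMono_of_isPushout (IsPushout.of_has_biproduct X Y)
    ⟨_, _, ses_zero_id (S := S) Y⟩
  exact ses_of_isCokernel h (w := by simp) (biprod.isCokernelInlCokernelFork X Y)

lemma admEpi_desc_id {M X : E} (h : M ⟶ X) : S.AdmEpi (biprod.desc h (𝟙 X)) :=
  ⟨M, biprod.inl ≫ (Biprod.unipotentUpper h).inv, S.iso_closed (Iso.refl _)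
    (Biprod.unipotentUpper h).symm (Iso.refl _) (by simp)
    (by ext <;> simp [Biprod.unipotentUpper, Biprod.ofComponents]) (ses_inl_snd M X)⟩

lemma admEpi_desc {M G X : E} (h : M ⟶ X) {π : G ⟶ X} (hπ : S.AdmEpi π) :
    S.AdmEpi (biprod.desc h π) := by
  have := S.epi_comp (admEpi_of_isPullback (isPullback_biprod_map_snd π M) hπ) (admEpi_desc_id h)
  rwa [show biprod.map (𝟙 M) π ≫ biprod.desc h (𝟙 X) = biprod.desc h π by ext <;> simp] at this

lemma EProjective.biprod {P Q : E} (hP : S.EProjective P) (hQ : S.EProjective Q) :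
    S.EProjective (P ⊞ Q) := by
  intro Y Z g hg u
  obtain ⟨v₁, h₁⟩ := hP g hg (biprod.inl ≫ u)
  obtain ⟨v₂, h₂⟩ := hQ g hg (biprod.inr ≫ u)
  exact ⟨biprod.desc v₁ v₂, by ext <;> simp [h₁, h₂]⟩

end Biprod

lemma exists_lift_of_retraction {P P' Y Y' Z Z' : E} {p : P ⟶ P'} {r : P' ⟶ P}
    (hr : p ≫ r = 𝟙 P) (hP' : S.EProjective P') {y : Y ⟶ Y'} {z : Z ⟶ Z'} {g : Y ⟶ Z}
    {g' : Y' ⟶ Z'} (hg' : S.AdmEpi g') (hg : y ≫ g' = g ≫ z) {u : P ⟶ Z} {u' : P' ⟶ Z'}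
    (hu : p ≫ u' = u ≫ z) {v : P ⟶ Y} (hv : v ≫ g = u) :
    ∃ v' : P' ⟶ Y', v' ≫ g' = u' ∧ p ≫ v' = v ≫ y := by
  obtain ⟨w, hw⟩ := hP' g' hg' u'
  -- `p ≫ (𝟙 - r ≫ p) = 0`, while `r ≫ v ≫ y` and `r ≫ p ≫ w` have the same composite with `g'`
  refine ⟨r ≫ v ≫ y + (𝟙 P' - r ≫ p) ≫ w, ?_, ?_⟩
  · simp only [Preadditive.add_comp, Preadditive.sub_comp, Category.assoc, Category.id_comp, hw,
      hg, hu, reassoc_of% hv]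
    abel
  · simp [Preadditive.comp_sub, reassoc_of% hr]

lemma exists_extension_of_ses {A A' B B' D D' J J' : E} {a : A ⟶ A'} {b : B ⟶ B'} {d : D ⟶ D'}
    {φ : A ⟶ B} {φ' : A' ⟶ B'} {π : B ⟶ D} {π' : B' ⟶ D'} (hφ : S.ses φ π) (hφ' : S.ses φ' π')
    (hd : S.AdmMono d) (hφc : a ≫ φ' = φ ≫ b) (hπc : b ≫ π' = π ≫ d) {j : J ⟶ J'}
    (hJ' : S.EInjective J') {u : A ⟶ J} {u' : A' ⟶ J'} (hu : a ≫ u' = u ≫ j) {v : B ⟶ J}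
    (hv : φ ≫ v = u) : ∃ v' : B' ⟶ J', φ' ≫ v' = u' ∧ b ≫ v' = v ≫ j := by
  obtain ⟨Q, q, hq⟩ := hd
  obtain ⟨P, g, t, hpb, -⟩ := S.epi_pullback π' d ⟨_, _, hφ'⟩
  have ht : S.AdmMono t := ⟨_, _, ses_snd_of_isPullback hpb ⟨_, _, hφ'⟩ hq⟩
  obtain ⟨t₀, ht₀g, ht₀t⟩ : ∃ t₀ : A' ⟶ P, t₀ ≫ g = 0 ∧ t₀ ≫ t = φ' :=
    ⟨hpb.lift 0 φ' (by simp [S.comp_zero hφ']), hpb.lift_fst _ _ _, hpb.lift_snd _ _ _⟩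
  obtain ⟨β, hβg, hβt⟩ : ∃ β : B ⟶ P, β ≫ g = π ∧ β ≫ t = b :=
    ⟨hpb.lift π b hπc.symm, hpb.lift_fst _ _ _, hpb.lift_snd _ _ _⟩
  have hφβ : φ ≫ β = a ≫ t₀ :=
    hpb.hom_ext (by simp [hβg, ht₀g, S.comp_zero hφ]) (by simp [hβt, ht₀t, hφc])
  obtain ⟨w, hw⟩ := hJ' t₀ ⟨_, _, ses_kernel_lift_of_isPullback hpb hφ' ht₀t ht₀g⟩ u'
  -- correct `w` on the image of `β` by a map factoring through `g`, which vanishes on `t₀`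
  have he : φ ≫ (v ≫ j - β ≫ w) = 0 := by
    rw [Preadditive.comp_sub, reassoc_of% hφβ, hw, reassoc_of% hv, hu, sub_self]
  obtain ⟨e, hπe⟩ := CokernelCofork.IsColimit.desc' (S.isCokernel hφ).some _ he
  obtain ⟨v', hv'⟩ := hJ' t ht (w + g ≫ e)
  refine ⟨v', ?_, ?_⟩
  · rw [← ht₀t, Category.assoc, hv', Preadditive.comp_add, hw, reassoc_of% ht₀g, zero_comp,
      add_zero]
  · rw [← hβt, Category.assoc, hv', Preadditive.comp_add, reassoc_of% hβg]
    simp only [Cofork.π_ofπ] at hπe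
    rw [hπe, add_sub_cancel]

variable {k : ℕ}

def MMorHom.id (X : S.MMorObj k) : S.MMorHom X X :=
  ⟨fun _ => 𝟙 _, fun _ => by simp⟩

def MMorHom.comp {X Y Z : S.MMorObj k} (f : S.MMorHom X Y) (g : S.MMorHom Y Z) :
    S.MMorHom X Z :=
  ⟨fun i => f.app i ≫ g.app i, fun j => by rw [reassoc_of% f.comm j, g.comm j, Category.assoc]⟩

lemma MMorInjective.of_retract {X J : S.MMorObj k} (hJ : MMorInjective J) (σ : S.MMorHom X J)
    (ρ : S.MMorHom J X) (h : ∀ i, σ.app i ≫ ρ.app i = 𝟙 (X.obj i)) : MMorInjective X := by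
  intro A B f hf u
  obtain ⟨w, hw⟩ := hJ f hf (u.comp σ)
  exact ⟨w.comp ρ, fun i => by
    simp [MMorHom.comp, reassoc_of% hw i, h i]⟩

lemma MMorProjective.of_retract {X P : S.MMorObj k} (hP : MMorProjective P) (σ : S.MMorHom X P)
    (ρ : S.MMorHom P X) (h : ∀ i, σ.app i ≫ ρ.app i = 𝟙 (X.obj i)) : MMorProjective X := by
  intro Y Z g hg u
  obtain ⟨w, hw⟩ := hP g hg (ρ.comp u)
  exact ⟨σ.comp w, fun i => by
    simp [MMorHom.comp, hw i, reassoc_of% h i]⟩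

lemma mmorProjective_of_split {P : S.MMorObj k} (hP : ∀ i, S.EProjective (P.obj i))
    (hsplit : ∀ j, ∃ r, P.map j ≫ r = 𝟙 (P.obj j.castSucc)) : MMorProjective P := by
  rintro Y Z g ⟨X, κ, hses⟩ u
  obtain ⟨v₀, hv₀⟩ := hP 0 (g.app 0) ⟨_, _, hses 0⟩ (u.app 0)
  obtain ⟨v, hv⟩ := Fin.exists_forall_rel_castSucc_succ
    (D := fun i => {v : P.obj i ⟶ Y.obj i // v ≫ g.app i = u.app i})
    (R := fun j v v' => P.map j ≫ v'.1 = v.1 ≫ Y.map j) ⟨v₀, hv₀⟩ fun j v => by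
      obtain ⟨r, hr⟩ := hsplit j
      obtain ⟨v', h₁, h₂⟩ :=
        exists_lift_of_retraction hr (hP _) ⟨_, _, hses _⟩ (g.comm j) (u.comm j) v.2
      exact ⟨⟨v', h₁⟩, h₂⟩
  exact ⟨⟨fun i => (v i).1, hv⟩, fun i => (v i).2⟩

lemma mmorInjective_of_forall_eInjective {J : S.MMorObj k} (hJ : ∀ i, S.EInjective (J.obj i)) :
    MMorInjective J := by
  rintro A B φ ⟨D, π, hses⟩ u
  obtain ⟨v₀, hv₀⟩ := hJ 0 (φ.app 0) ⟨_, _, hses 0⟩ (u.app 0)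
  obtain ⟨v, hv⟩ := Fin.exists_forall_rel_castSucc_succ
    (D := fun i => {v : B.obj i ⟶ J.obj i // φ.app i ≫ v = u.app i})
    (R := fun j v v' => B.map j ≫ v'.1 = v.1 ≫ J.map j) ⟨v₀, hv₀⟩ fun j v => by
      obtain ⟨v', h₁, h₂⟩ := exists_extension_of_ses (hses _) (hses _) (D.adm j) (φ.comm j)
        (π.comm j) (hJ _) (u.comm j) v.2
      exact ⟨⟨v', h₁⟩, h₂⟩
  exact ⟨⟨fun i => (v i).1, hv⟩, fun i => (v i).2⟩

variable (S) in
structure InjectiveEmbedding (X : E) where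
  I : E
  C : E
  ι : X ⟶ I
  π : I ⟶ C
  ses : S.ses ι π
  injective : S.EInjective I

variable (S) in
structure ProjectivePresentation (X : E) where
  P : E
  K : E
  κ : K ⟶ P
  π : P ⟶ X
  ses : S.ses κ π
  projective : S.EProjective P

lemma InjectiveEmbedding.exists_extend
    (hinj : ∀ X : E, ∃ (I : E) (ι : X ⟶ I), S.EInjective I ∧ S.AdmMono ι) {X X' : E}
    (e : S.InjectiveEmbedding X) {x : X ⟶ X'} (hx : S.AdmMono x) :
    ∃ (e' : S.InjectiveEmbedding X') (m : e.I ⟶ e'.I) (c : e.C ⟶ e'.C), S.AdmMono m ∧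
      S.AdmMono c ∧ x ≫ e'.ι = e.ι ≫ m ∧ m ≫ e'.π = e.π ≫ c := by
  obtain ⟨P, f, t, hpo, hf⟩ := S.mono_pushout x e.ι hx
  have hq : S.ses t (hpo.desc e.π 0 (by simp [S.comp_zero e.ses])) :=
    ses_cokernel_desc_of_isPushout hpo e.ses (hpo.inl_desc _ _ _) (hpo.inr_desc _ _ _)
  obtain ⟨I', j, hI', hj⟩ := hinj P
  obtain ⟨C', c, π', hpo', hc⟩ := S.mono_pushout j _ hj
  refine ⟨⟨I', C', t ≫ j, π', ses_comp_of_isPushout hpo'.flip hj hq, hI'⟩, f ≫ j, c,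
    S.mono_comp hf hj, hc, by rw [← Category.assoc, ← hpo.w, Category.assoc], ?_⟩
  rw [Category.assoc, ← hpo'.w, ← Category.assoc, hpo.inl_desc]

lemma exists_mmorAdmMono_forall_eInjective
    (hinj : ∀ X : E, ∃ (I : E) (ι : X ⟶ I), S.EInjective I ∧ S.AdmMono ι)
    (X : S.MMorObj k) :
    ∃ (J : S.MMorObj k) (ι : S.MMorHom X J), MMorAdmMono ι ∧ ∀ i, S.EInjective (J.obj i) := by
  obtain ⟨I, ι, hI, C, π, h⟩ := hinj (X.obj 0)
  obtain ⟨e, he⟩ := Fin.exists_forall_rel_castSucc_succ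
    (D := fun i => S.InjectiveEmbedding (X.obj i)) ⟨I, C, ι, π, h, hI⟩
    fun j e => e.exists_extend hinj (X.adm j)
  choose m c hm hc hι hπ using he
  exact ⟨⟨fun i => (e i).I, m, hm⟩, ⟨fun i => (e i).ι, hι⟩,
    ⟨⟨fun i => (e i).C, c, hc⟩, ⟨fun i => (e i).π, hπ⟩, fun i => (e i).ses⟩,
    fun i => (e i).injective⟩

lemma ProjectivePresentation.exists_extend
    (hproj : ∀ X : E, ∃ (P : E) (p : P ⟶ X), S.EProjective P ∧ S.AdmEpi p) {X X' : E}
    (e : S.ProjectivePresentation X) (x : X ⟶ X') :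
    ∃ (e' : S.ProjectivePresentation X') (m : e.P ⟶ e'.P) (l : e.K ⟶ e'.K), S.AdmMono m ∧
      (∃ r, m ≫ r = 𝟙 e.P) ∧ S.AdmMono l ∧ m ≫ e'.π = e.π ≫ x ∧ l ≫ e'.κ = e.κ ≫ m := by
  have := S.hasBinaryBiproducts
  obtain ⟨G, p, hG, hp⟩ := hproj X'
  obtain ⟨Kb, κb, hb⟩ := admEpi_desc x hp
  have ha : S.ses (e.κ ≫ biprod.inl) (biprod.map e.π (𝟙 G)) :=
    ses_kernel_lift_of_isPullback (isPullback_biprod_map_fst e.π G) e.ses (by simp)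
      (by simp [reassoc_of% (S.comp_zero e.ses)])
  obtain ⟨K', κ', hab⟩ := S.epi_comp ⟨_, _, ha⟩ ⟨_, _, hb⟩
  obtain ⟨l, hl⟩ := KernelFork.IsLimit.lift' (S.isKernel hab).some (e.κ ≫ biprod.inl)
    (by rw [← Category.assoc, S.comp_zero ha, zero_comp])
  obtain ⟨n, hn⟩ := KernelFork.IsLimit.lift' (S.isKernel hb).some (κ' ≫ biprod.map e.π (𝟙 G))
    (by rw [Category.assoc, S.comp_zero hab])
  have hπ : biprod.map e.π (𝟙 G) ≫ biprod.desc x p = biprod.desc (e.π ≫ x) p := by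
    ext <;> simp
  refine ⟨⟨e.P ⊞ G, K', κ', _, hπ ▸ hab, e.projective.biprod hG⟩, biprod.inl, l,
    ⟨_, _, ses_inl_snd _ _⟩, ⟨biprod.fst, by simp⟩, ⟨_, _, ses_kernel_comp ha hb hab hl hn⟩,
    by simp, hl⟩

lemma exists_mmorAdmEpi_forall_eProjective
    (hproj : ∀ X : E, ∃ (P : E) (p : P ⟶ X), S.EProjective P ∧ S.AdmEpi p)
    (X : S.MMorObj k) :
    ∃ (P : S.MMorObj k) (p : S.MMorHom P X), MMorAdmEpi p ∧ (∀ i, S.EProjective (P.obj i)) ∧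
      ∀ j, ∃ r, P.map j ≫ r = 𝟙 (P.obj j.castSucc) := by
  obtain ⟨P, π, hP, K, κ, h⟩ := hproj (X.obj 0)
  obtain ⟨e, he⟩ := Fin.exists_forall_rel_castSucc_succ
    (D := fun i => S.ProjectivePresentation (X.obj i)) ⟨P, K, κ, π, h, hP⟩
    fun j e => e.exists_extend hproj (X.map j)
  choose m l hm hsplit hl hπ hκ using he
  exact ⟨⟨fun i => (e i).P, m, hm⟩, ⟨fun i => (e i).π, hπ⟩,
    ⟨⟨fun i => (e i).K, l, hl⟩, ⟨fun i => (e i).κ, hκ⟩, fun i => (e i).ses⟩,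
    fun i => (e i).projective, hsplit⟩

end ExactStructure

/-- If `E` is a Frobenius exact category (enough projectives, enough
injectives, and projectives = injectives), then the monomorphism category `MMor_k(E)` is
again Frobenius exact. -/
theorem mmor_frobenius
    {E : Type u} [Category.{v} E] [Preadditive E] [HasZeroObject E]
    (S : ExactStructure E) (k : ℕ)
    (hproj : ∀ X : E, ∃ (P : E) (p : P ⟶ X), S.EProjective P ∧ S.AdmEpi p)
    (hinj : ∀ X : E, ∃ (I : E) (ι : X ⟶ I), S.EInjective I ∧ S.AdmMono ι)
    (hfrob : ∀ X : E, S.EProjective X ↔ S.EInjective X) :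
    (∀ X : S.MMorObj k, ∃ (P : S.MMorObj k) (p : S.MMorHom P X),
        ExactStructure.MMorProjective P ∧ ExactStructure.MMorAdmEpi p) ∧
    (∀ X : S.MMorObj k, ∃ (I : S.MMorObj k) (ι : S.MMorHom X I),
        ExactStructure.MMorInjective I ∧ ExactStructure.MMorAdmMono ι) ∧
    (∀ X : S.MMorObj k,
        ExactStructure.MMorProjective X ↔ ExactStructure.MMorInjective X) := by
  open ExactStructure in
  refine ⟨fun X => ?_, fun X => ?_, fun X => ⟨fun hX => ?_, fun hX => ?_⟩⟩
  · obtain ⟨P, p, hp, hP, hsplit⟩ := exists_mmorAdmEpi_forall_eProjective hproj X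
    exact ⟨P, p, mmorProjective_of_split hP hsplit, hp⟩
  · obtain ⟨J, ι, hι, hJ⟩ := exists_mmorAdmMono_forall_eInjective hinj X
    exact ⟨J, ι, mmorInjective_of_forall_eInjective hJ, hι⟩
  · obtain ⟨P, p, hp, hP, -⟩ := exists_mmorAdmEpi_forall_eProjective hproj X
    obtain ⟨σ, hσ⟩ := hX p hp (MMorHom.id X)
    exact (mmorInjective_of_forall_eInjective fun i => (hfrob _).1 (hP i)).of_retract σ p hσ
  · obtain ⟨J, ι, hι, hJ⟩ := exists_mmorAdmMono_forall_eInjective hinj X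
    obtain ⟨ρ, hρ⟩ := hX ι hι (MMorHom.id X)
    -- an admissible mono out of an injective splits
    exact (mmorProjective_of_split (fun i => (hfrob _).2 (hJ i))
      fun j => hJ _ _ (J.adm j) (𝟙 _)).of_retract ι ρ hρ
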